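/- arXiv:1306.2454 — 5 statements merged into one kernel-verified Lean document; each statement's English description precedes it below -/
import Mathlib

section
/- For positive reals δ and λ with δ < λ, the function ρ ↦ (ρ² + λδ)/(ρ² + λδ + (λ+δ)ρ) on (δ, ∞) attains its minimum at ρ = √(δλ), and the minimum value equals (1 + (δ+λ)/(2√(δλ)))⁻¹. -/
theorem stmt_1 (δ lam : ℝ) (hδ : 0 < δ) (hlam : 0 < lam) (h : δ < lam) :
    Real.sqrt (δ * lam) ∈ Set.Ioi δ ∧
    (∀ ρ ∈ Set.Ioi δ,
      (Real.sqrt (δ * lam) ^ 2 + lam * δ) /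
        (Real.sqrt (δ * lam) ^ 2 + lam * δ + (lam + δ) * Real.sqrt (δ * lam)) ≤
      (ρ ^ 2 + lam * δ) / (ρ ^ 2 + lam * δ + (lam + δ) * ρ)) ∧
    (Real.sqrt (δ * lam) ^ 2 + lam * δ) /
        (Real.sqrt (δ * lam) ^ 2 + lam * δ + (lam + δ) * Real.sqrt (δ * lam)) =
      (1 + (δ + lam) / (2 * Real.sqrt (δ * lam)))⁻¹ := by
  set s := Real.sqrt (δ * lam) with hs
  have hmul : (0:ℝ) < δ * lam := mul_pos hδ hlam
  have hs2 : s ^ 2 = δ * lam := Real.sq_sqrt hmul.le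
  have hspos : 0 < s := Real.sqrt_pos.mpr hmul
  have hsδ : δ < s := by
    nlinarith [hs2, hspos, sq_nonneg (s - δ)]
  refine ⟨hsδ, ?_, ?_⟩
  · intro ρ hρ
    have hρpos : 0 < ρ := hδ.trans hρ
    have hd1 : 0 < s ^ 2 + lam * δ + (lam + δ) * s := by positivity
    have hd2 : 0 < ρ ^ 2 + lam * δ + (lam + δ) * ρ := by positivity
    rw [div_le_div_iff₀ hd1 hd2]
    nlinarith [mul_nonneg hspos.le (sq_nonneg (ρ - s)), mul_nonneg (add_pos hlam hδ).le
      (mul_nonneg hspos.le (sq_nonneg (ρ - s)))]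
  · have hd1 : 0 < s ^ 2 + lam * δ + (lam + δ) * s := by positivity
    rw [eq_comm, inv_eq_iff_eq_inv, eq_comm, inv_div]
    have h1 : s ^ 2 + lam * δ ≠ 0 := by positivity
    field_simp
    nlinarith [hs2, hspos]
end

section
/- For positive reals ρ, δ, λ, the difference ζ_R(α,ρ,λ) − ζ(ρ,λ) = ρ(1−α)(λ+δ)/(ρ² + (λ+δ)ρ + λδ) is strictly negative whenever α > 1. Consequently, for 1 < α < 2(ρ+δ)(ρ+λ)/(ρ(λ+δ)) the over-relaxed iteration has a strictly smaller convergence factor than the standard one. -/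
theorem stmt_6 (ρ δ lam α : ℝ) (hρ : 0 < ρ) (hδ : 0 < δ) (hlam : 0 < lam) :
    (1 - α * ρ * (lam + δ) / ((ρ + lam) * (ρ + δ))) -
        (ρ ^ 2 + lam * δ) / (ρ ^ 2 + lam * δ + (lam + δ) * ρ) =
      ρ * (1 - α) * (lam + δ) / (ρ ^ 2 + (lam + δ) * ρ + lam * δ) ∧
    (1 < α →
      1 - α * ρ * (lam + δ) / ((ρ + lam) * (ρ + δ)) <
        (ρ ^ 2 + lam * δ) / (ρ ^ 2 + lam * δ + (lam + δ) * ρ)) := by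
  have h1 : (0:ℝ) < ρ + lam := by linarith
  have h2 : (0:ℝ) < ρ + δ := by linarith
  have h3 : (0:ℝ) < ρ ^ 2 + lam * δ + (lam + δ) * ρ := by positivity
  have h4 : (0:ℝ) < ρ ^ 2 + (lam + δ) * ρ + lam * δ := by positivity
  have heq : (1 - α * ρ * (lam + δ) / ((ρ + lam) * (ρ + δ))) -
        (ρ ^ 2 + lam * δ) / (ρ ^ 2 + lam * δ + (lam + δ) * ρ) =
      ρ * (1 - α) * (lam + δ) / (ρ ^ 2 + (lam + δ) * ρ + lam * δ) := by
    field_simp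
    ring
  refine ⟨heq, fun hα => ?_⟩
  have : ρ * (1 - α) * (lam + δ) / (ρ ^ 2 + (lam + δ) * ρ + lam * δ) < 0 := by
    apply div_neg_of_neg_of_pos _ h4
    have : 1 - α < 0 := by linarith
    have hld : 0 < lam + δ := by linarith
    nlinarith [mul_pos (mul_pos hρ hld) (neg_pos.mpr this)]
  linarith [heq]
end

section
/- Let 0 < λ₁ ≤ λₙ be positive reals. The function ρ ↦ max{1/(1+ρλ₁), ρλₙ/(1+ρλₙ)} over ρ > 0 attains its minimum at ρ* = 1/√(λ₁λₙ), and the minimum value equals λₙ/(λₙ + √(λ₁λₙ)). -/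
/-! The first branch is decreasing and the second increasing in `ρ`, and at `ρ* = 1/√(λ₁λₙ)`
both equal `λₙ/(λₙ + √(λ₁λₙ))` because `√(λ₁λₙ)² = λ₁λₙ`. The maximum of a decreasing and an
increasing function is smallest where they cross. -/

theorem le_max_of_antitoneOn_of_monotoneOn {α β : Type*} [LinearOrder α] [LinearOrder β]
    {s : Set α} {f g : α → β} (hf : AntitoneOn f s) (hg : MonotoneOn g s) {x₀ x : α}
    (hx₀ : x₀ ∈ s) (hx : x ∈ s) (hfg : f x₀ = g x₀) : f x₀ ≤ max (f x) (g x) := by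
  rcases le_total x x₀ with h | h
  · exact le_max_of_le_left (hf hx hx₀ h)
  · exact le_max_of_le_right (hfg ▸ hg hx₀ hx h)

theorem antitoneOn_one_div_one_add_mul {a : ℝ} (ha : 0 ≤ a) :
    AntitoneOn (fun ρ => 1 / (1 + ρ * a)) (Set.Ici 0) := by
  intro x hx y _ hxy
  have : 0 < 1 + x * a := by simp only [Set.mem_Ici] at hx; positivity
  exact one_div_le_one_div_of_le this (by gcongr)

theorem monotoneOn_mul_div_one_add_mul {a : ℝ} (ha : 0 ≤ a) :
    MonotoneOn (fun ρ => ρ * a / (1 + ρ * a)) (Set.Ici 0) := by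
  intro x hx y hy hxy
  simp only [Set.mem_Ici] at hx hy
  rw [div_le_div_iff₀ (by positivity) (by positivity)]
  nlinarith [mul_le_mul_of_nonneg_right hxy ha]

theorem one_div_one_add_one_div_mul_of_mul_self_eq {a b s : ℝ} (hs : 0 < s) (ha : 0 ≤ a)
    (hb : 0 ≤ b) (hsq : s * s = a * b) : 1 / (1 + 1 / s * a) = b / (b + s) := by
  rw [div_eq_div_iff (by positivity) (by positivity)]
  field_simp
  linear_combination hsq

theorem one_div_mul_div_one_add_one_div_mul {s b : ℝ} (hs : s ≠ 0) :
    1 / s * b / (1 + 1 / s * b) = b / (b + s) := by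
  rw [one_div_mul_eq_div, one_add_div hs, div_div_div_cancel_right₀ hs, add_comm]

theorem stmt_11 (l1 ln : ℝ) (h1 : 0 < l1) (h2 : l1 ≤ ln) :
    (∀ ρ : ℝ, 0 < ρ →
      max (1 / (1 + (1 / Real.sqrt (l1 * ln)) * l1))
          ((1 / Real.sqrt (l1 * ln)) * ln / (1 + (1 / Real.sqrt (l1 * ln)) * ln)) ≤
        max (1 / (1 + ρ * l1)) (ρ * ln / (1 + ρ * ln))) ∧
    max (1 / (1 + (1 / Real.sqrt (l1 * ln)) * l1))
        ((1 / Real.sqrt (l1 * ln)) * ln / (1 + (1 / Real.sqrt (l1 * ln)) * ln)) =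
      ln / (ln + Real.sqrt (l1 * ln)) := by
  have hln : 0 < ln := h1.trans_le h2
  have hs : 0 < √(l1 * ln) := by positivity
  have hfirst := one_div_one_add_one_div_mul_of_mul_self_eq hs h1.le hln.le
    (Real.mul_self_sqrt (by positivity))
  have hsecond := one_div_mul_div_one_add_one_div_mul (b := ln) hs.ne'
  have hcross := hfirst.trans hsecond.symm
  refine ⟨fun ρ hρ => ?_, by rw [hfirst, hsecond, max_self]⟩
  rw [← hcross, max_self]
  exact le_max_of_antitoneOn_of_monotoneOn (antitoneOn_one_div_one_add_mul h1.le)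
    (monotoneOn_mul_div_one_add_mul hln.le) (by positivity : (0 : ℝ) ≤ 1 / √(l1 * ln)) hρ.le
    hcross
end

section
/- Let 0 < λ₁ ≤ λₙ. The value of max over λ ∈ {λ₁, λₙ} of 2|ρλ/(1+ρλ) − 1/2| evaluated at ρ* = 1/√(λ₁λₙ) equals (λₙ − √(λ₁λₙ))/(λₙ + √(λ₁λₙ)). -/
theorem stmt_14 (l1 ln : ℝ) (h1 : 0 < l1) (h2 : l1 ≤ ln) :
    max (2 * |(1 / Real.sqrt (l1 * ln)) * l1 / (1 + (1 / Real.sqrt (l1 * ln)) * l1) - 1 / 2|)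
        (2 * |(1 / Real.sqrt (l1 * ln)) * ln / (1 + (1 / Real.sqrt (l1 * ln)) * ln) - 1 / 2|) =
      (ln - Real.sqrt (l1 * ln)) / (ln + Real.sqrt (l1 * ln)) := by
  have hn : 0 < ln := lt_of_lt_of_le h1 h2
  set s := Real.sqrt (l1 * ln) with hs
  have hs0 : 0 < s := Real.sqrt_pos.mpr (mul_pos h1 hn)
  have hsq : s ^ 2 = l1 * ln := Real.sq_sqrt (le_of_lt (mul_pos h1 hn))
  have hls : l1 ≤ s := by nlinarith [sq_nonneg (s - l1)]
  have hsn : s ≤ ln := by nlinarith [sq_nonneg (s - ln)]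
  have hd1 : (0:ℝ) < s + l1 := by positivity
  have hd2 : (0:ℝ) < s + ln := by positivity
  have r1 : (1 / s) * l1 / (1 + (1 / s) * l1) = l1 / (s + l1) := by
    rw [div_eq_div_iff (by positivity) hd1.ne']; field_simp
  have r2 : (1 / s) * ln / (1 + (1 / s) * ln) = ln / (s + ln) := by
    rw [div_eq_div_iff (by positivity) hd2.ne']; field_simp
  rw [r1, r2]
  have e1 : l1 / (s + l1) - 1 / 2 ≤ 0 := by
    rw [sub_nonpos, div_le_iff₀ hd1]; linarith
  have e2 : (0:ℝ) ≤ ln / (s + ln) - 1 / 2 := by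
    rw [sub_nonneg, le_div_iff₀ hd2]; linarith
  rw [abs_of_nonpos e1, abs_of_nonneg e2]
  have key : 2 * -(l1 / (s + l1) - 1 / 2) = (ln - s) / (ln + s) := by
    rw [eq_div_iff (by positivity : (ln + s) ≠ 0)]
    field_simp
    nlinarith
  have key2 : 2 * (ln / (s + ln) - 1 / 2) = (ln - s) / (ln + s) := by
    rw [eq_div_iff (by positivity : (ln + s) ≠ 0)]
    field_simp
    nlinarith
  rw [key, key2, max_self]
end

section
/- For any m×n real matrices setting: let ζ = (1/2)‖2M − I‖ + 1/2 and ζ_R(α) = (α/2)‖2M − I‖ + |1 − α/2| for a symmetric matrix M with ‖2M − I‖ ≤ 1. Then ζ_R(α) − ζ = (1 − α)(1/2 − (1/2)‖2M − I‖), which is strictly negative for all α > 1 whenever ‖2M − I‖ < 1. -/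
open Matrix

theorem stmt_15 (n : ℕ) (M : Matrix (Fin n) (Fin n) ℝ) (hsym : M.IsHermitian)
    (hM : ‖Matrix.toEuclideanCLM (𝕜 := ℝ) (n := Fin n) (2 • M - 1)‖ ≤ 1) :
    (∀ α : ℝ, α ≤ 2 →
      ((α / 2) * ‖Matrix.toEuclideanCLM (𝕜 := ℝ) (n := Fin n) (2 • M - 1)‖ + |1 - α / 2|) -
        ((1 / 2) * ‖Matrix.toEuclideanCLM (𝕜 := ℝ) (n := Fin n) (2 • M - 1)‖ + 1 / 2) =
      (1 - α) * (1 / 2 - (1 / 2) * ‖Matrix.toEuclideanCLM (𝕜 := ℝ) (n := Fin n) (2 • M - 1)‖)) ∧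
    (‖Matrix.toEuclideanCLM (𝕜 := ℝ) (n := Fin n) (2 • M - 1)‖ < 1 →
      ∀ α : ℝ, 1 < α → α ≤ 2 →
        (α / 2) * ‖Matrix.toEuclideanCLM (𝕜 := ℝ) (n := Fin n) (2 • M - 1)‖ + |1 - α / 2| <
          (1 / 2) * ‖Matrix.toEuclideanCLM (𝕜 := ℝ) (n := Fin n) (2 • M - 1)‖ + 1 / 2) := by
  set t := ‖Matrix.toEuclideanCLM (𝕜 := ℝ) (n := Fin n) (2 • M - 1)‖ with ht
  constructor
  · intro α hα
    rw [abs_of_nonneg (by linarith)]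
    ring
  · intro h1 α hα hα2
    rw [abs_of_nonneg (by linarith)]
    nlinarith
end
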